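/- Let (Q,C) be a truncated quiver with Q connected, let S be a slice of ℤ(Q,C), set C_S := Q₁ \ π(S₁), and let x ∈ S₀. Then: (a) x is a strict source (respectively, strict sink) of S if and only if π(x) is a strict source (respectively, strict sink) of (Q, C_S); (b) in that case, μ⁺_{π(x)}(C_S) = C_{μ⁺ₓ(S)} (respectively, μ⁻_{π(x)}(C_S) = C_{μ⁻ₓ(S)}). -/

import Mathlib

/-!
A slice `S` of `ℤ(Q,C)` is the graph of a level function `h : Q₀ → ℤ`, and the slice condition
says that `h (t a) - h (s a) + g_C(a)` is `0` or `1` for every arrow `a`; the arrows lying in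
`S` are the lifts of those with value `0`, so `C_S` is the set of arrows with value `1`.
Mutating `S` at `(v, h v)` changes `h` by `∓1` at `v` only, so both parts of the theorem become
integer arithmetic on the arrows incident to `v`.
-/


/-- A quiver given by a (finite) set of vertices `V`, a set of arrows `A`,
and source/target maps `s`, `t`. -/
structure PreQuiver where
  V : Type
  A : Type
  s : A → V
  t : A → V

namespace PreQuiver

variable (Q : PreQuiver)

/-- A step of a walk: an arrow of the double quiver, i.e. an arrow of `Q`
together with an orientation (`true` = the arrow itself, `false` = its formal inverse). -/
abbrev Step := Q.A × Bool

/-- The source of a step in the double quiver. -/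
def stepSrc (e : Q.Step) : Q.V := if e.2 then Q.s e.1 else Q.t e.1

/-- The target of a step in the double quiver. -/
def stepTgt (e : Q.Step) : Q.V := if e.2 then Q.t e.1 else Q.s e.1

/-- `Q.IsWalk x y l` : the list of steps `l` is a walk from `x` to `y`
(i.e. a path in the double quiver). -/
def IsWalk : Q.V → Q.V → List Q.Step → Prop
  | x, y, [] => x = y
  | x, y, e :: l => Q.stepSrc e = x ∧ IsWalk (Q.stepTgt e) y l

/-- `Q.IsPath x y l` : the list of arrows `l` is a path of arrows from `x` to `y`. -/
def IsPath : Q.V → Q.V → List Q.A → Prop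
  | x, y, [] => x = y
  | x, y, a :: l => Q.s a = x ∧ IsPath (Q.t a) y l

/-- The degree `g_C(a)` of an arrow: `1` if `a ∈ C` and `0` otherwise. -/
noncomputable def gA (C : Set Q.A) (a : Q.A) : ℤ :=
  haveI := Classical.propDecidable (a ∈ C)
  if a ∈ C then 1 else 0

/-- The degree of a step: `g_C(a)` for `a` and `-g_C(a)` for `a⁻¹`. -/
noncomputable def gStep (C : Set Q.A) (e : Q.Step) : ℤ :=
  if e.2 then Q.gA C e.1 else -Q.gA C e.1

/-- The degree `g_C(p)` of a walk, extended additively. -/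
noncomputable def gWalk (C : Set Q.A) (l : List Q.Step) : ℤ := (l.map (Q.gStep C)).sum

/-- The degree `g_C(p)` of a path of arrows. -/
noncomputable def gPath (C : Set Q.A) (l : List Q.A) : ℤ := (l.map (Q.gA C)).sum

/-- Two sets of arrows are compatible if they give every cyclic walk the same degree. -/
def Compatible (C C' : Set Q.A) : Prop :=
  ∀ (x : Q.V) (l : List Q.Step), Q.IsWalk x x l → Q.gWalk C l = Q.gWalk C' l

/-- A quiver is connected if any two vertices are joined by a walk. -/
def Connected : Prop := ∀ x y : Q.V, ∃ l : List Q.Step, Q.IsWalk x y l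

/-- The covering quiver `ℤ(Q,C)`: vertices `Q₀ × ℤ`; for an arrow `a : x → y` and `ℓ ∈ ℤ`,
an arrow `(a,ℓ) : (x,ℓ) → (y,ℓ)` if `a ∉ C` and `(a,ℓ) : (x,ℓ) → (y,ℓ-1)` if `a ∈ C`. -/
noncomputable def cover (C : Set Q.A) : PreQuiver where
  V := Q.V × ℤ
  A := Q.A × ℤ
  s := fun e => (Q.s e.1, e.2)
  t := fun e => (Q.t e.1, e.2 - Q.gA C e.1)

end PreQuiver

namespace PreQuiver

variable (Q : PreQuiver)

/-- The arrows of the full subquiver of `ℤ(Q,C)` on a set `S` of vertices: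
those arrows with both endpoints in `S`. -/
noncomputable def sliceArrows (C : Set Q.A) (S : Set (Q.V × ℤ)) : Set (Q.A × ℤ) :=
  {e : Q.A × ℤ | (Q.cover C).s e ∈ S ∧ (Q.cover C).t e ∈ S}

/-- `S` determines a slice of `ℤ(Q,C)`: every `τ`-orbit of vertices meets `S` exactly once, and
for every arrow of `ℤ(Q,C)` starting in `S` the target lies in `S ∪ τ⁻¹S`. -/
noncomputable def IsSlice (C : Set Q.A) (S : Set (Q.V × ℤ)) : Prop :=
  (∀ x : Q.V, ∃! ℓ : ℤ, (x, ℓ) ∈ S) ∧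
  ∀ e : Q.A × ℤ, (Q.cover C).s e ∈ S →
    ((Q.cover C).t e ∈ S ∨ (((Q.cover C).t e).1, ((Q.cover C).t e).2 + 1) ∈ S)

/-- The cut `C_S := Q₁ \ π(S₁)` associated with a slice `S`. -/
noncomputable def cutOf (C : Set Q.A) (S : Set (Q.V × ℤ)) : Set Q.A :=
  {a : Q.A | a ∉ (fun e : Q.A × ℤ => e.1) '' Q.sliceArrows C S}

end PreQuiver

namespace PreQuiver

variable (Q : PreQuiver)

/-- `x` is a strict source of the slice `S`: `x ∈ S₀`, no arrow of `ℤ(Q,C)` ending at `x`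
belongs to (the arrows of) `S`, and every arrow of `ℤ(Q,C)` starting at `x` belongs to `S`. -/
noncomputable def SliceStrictSource (C : Set Q.A) (S : Set (Q.V × ℤ)) (x : Q.V × ℤ) : Prop :=
  x ∈ S ∧ (∀ e : Q.A × ℤ, (Q.cover C).t e = x → e ∉ Q.sliceArrows C S) ∧
    ∀ e : Q.A × ℤ, (Q.cover C).s e = x → e ∈ Q.sliceArrows C S

/-- `x` is a strict sink of the slice `S`: `x ∈ S₀`, no arrow of `ℤ(Q,C)` starting at `x`
belongs to (the arrows of) `S`, and every arrow of `ℤ(Q,C)` ending at `x` belongs to `S`. -/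
noncomputable def SliceStrictSink (C : Set Q.A) (S : Set (Q.V × ℤ)) (x : Q.V × ℤ) : Prop :=
  x ∈ S ∧ (∀ e : Q.A × ℤ, (Q.cover C).s e = x → e ∉ Q.sliceArrows C S) ∧
    ∀ e : Q.A × ℤ, (Q.cover C).t e = x → e ∈ Q.sliceArrows C S

/-- The slice-mutation `μ⁺ₓ(S)`: the full subquiver on `(S₀ \ {x}) ∪ {τ⁻¹x}`. -/
def sMutPlus (S : Set (Q.V × ℤ)) (x : Q.V × ℤ) : Set (Q.V × ℤ) :=
  insert (x.1, x.2 - 1) (S \ {x})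

/-- The slice-mutation `μ⁻ₓ(S)`: the full subquiver on `(S₀ \ {x}) ∪ {τx}`. -/
def sMutMinus (S : Set (Q.V × ℤ)) (x : Q.V × ℤ) : Set (Q.V × ℤ) :=
  insert (x.1, x.2 + 1) (S \ {x})

end PreQuiver

namespace PreQuiver

variable (Q : PreQuiver)

/-- `x` is a strict source of `(Q,C)`: every arrow ending at `x` belongs to `C` and
every arrow starting at `x` does not belong to `C`. -/
def IsStrictSource (C : Set Q.A) (x : Q.V) : Prop :=
  (∀ a : Q.A, Q.t a = x → a ∈ C) ∧ ∀ a : Q.A, Q.s a = x → a ∉ C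

/-- `x` is a strict sink of `(Q,C)`: every arrow starting at `x` belongs to `C` and
every arrow ending at `x` does not belong to `C`. -/
def IsStrictSink (C : Set Q.A) (x : Q.V) : Prop :=
  (∀ a : Q.A, Q.s a = x → a ∈ C) ∧ ∀ a : Q.A, Q.t a = x → a ∉ C

/-- The cut-mutation `μ⁺ₓ(C)`: remove from `C` all arrows ending at `x` and add all arrows
starting at `x`. -/
def mutPlus (C : Set Q.A) (x : Q.V) : Set Q.A :=
  (C \ {a : Q.A | Q.t a = x}) ∪ {a : Q.A | Q.s a = x}

/-- The cut-mutation `μ⁻ₓ(C)`: remove from `C` all arrows starting at `x` and add all arrows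
ending at `x`. -/
def mutMinus (C : Set Q.A) (x : Q.V) : Set Q.A :=
  (C \ {a : Q.A | Q.s a = x}) ∪ {a : Q.A | Q.t a = x}

end PreQuiver

namespace PreQuiver

variable {Q : PreQuiver} {C : Set Q.A}

theorem IsSlice.exists_graph_eq {S : Set (Q.V × ℤ)} (hS : Q.IsSlice C S) :
    ∃ h : Q.V → ℤ, Function.graph h = S :=
  ((SetRel.exists_graph_eq_iff S).2 hS.1).exists

variable {h : Q.V → ℤ}

theorem mem_sliceArrows_graph {e : Q.A × ℤ} :
    e ∈ Q.sliceArrows C (Function.graph h) ↔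
      h (Q.s e.1) = e.2 ∧ h (Q.t e.1) = e.2 - Q.gA C e.1 :=
  Iff.rfl

theorem mem_cutOf_graph {a : Q.A} :
    a ∈ Q.cutOf C (Function.graph h) ↔ h (Q.t a) ≠ h (Q.s a) - Q.gA C a := by
  simp [cutOf, mem_sliceArrows_graph]

theorem isSlice_graph_iff :
    Q.IsSlice C (Function.graph h) ↔
      ∀ a : Q.A, h (Q.t a) = h (Q.s a) - Q.gA C a ∨ h (Q.t a) = h (Q.s a) - Q.gA C a + 1 := by
  simp [IsSlice, cover]

theorem sliceStrictSource_graph_iff {v : Q.V} :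
    Q.SliceStrictSource C (Function.graph h) (v, h v) ↔
      Q.IsStrictSource (Q.cutOf C (Function.graph h)) v := by
  simp only [SliceStrictSource, IsStrictSource, mem_cutOf_graph, mem_sliceArrows_graph, cover,
    Function.mem_graph, Prod.mk.injEq, sub_eq_iff_eq_add, not_and, and_imp, Prod.forall,
    forall_eq_apply_imp_iff, add_sub_cancel_right, true_and, ne_eq, Decidable.not_not]
  exact and_congr (forall₂_congr fun a ha => by subst ha; omega)
    (forall₂_congr fun a ha => by subst ha; omega)

theorem sliceStrictSink_graph_iff {v : Q.V} :
    Q.SliceStrictSink C (Function.graph h) (v, h v) ↔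
      Q.IsStrictSink (Q.cutOf C (Function.graph h)) v := by
  simp only [SliceStrictSink, IsStrictSink, mem_cutOf_graph, mem_sliceArrows_graph, cover,
    Function.mem_graph, Prod.mk.injEq, sub_eq_iff_eq_add, not_and, and_imp, Prod.forall,
    forall_eq_apply_imp_iff, add_sub_cancel_right, true_and, ne_eq, Decidable.not_not]
  exact and_congr (forall₂_congr fun a ha => by subst ha; omega)
    (forall₂_congr fun a ha => by subst ha; omega)

variable [DecidableEq Q.V]

theorem sMutPlus_graph (v : Q.V) :
    Q.sMutPlus (Function.graph h) (v, h v) = Function.graph (Function.update h v (h v - 1)) := by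
  ext ⟨w, ℓ⟩
  by_cases hw : w = v
  · subst hw
    simp only [sMutPlus, Set.mem_insert_iff, Prod.mk.injEq, true_and, Set.mem_sdiff,
      Function.mem_graph, Set.mem_singleton_iff, Function.update_self]
    omega
  · simp [sMutPlus, hw]

theorem sMutMinus_graph (v : Q.V) :
    Q.sMutMinus (Function.graph h) (v, h v) = Function.graph (Function.update h v (h v + 1)) := by
  ext ⟨w, ℓ⟩
  by_cases hw : w = v
  · subst hw
    simp only [sMutMinus, Set.mem_insert_iff, Prod.mk.injEq, true_and, Set.mem_sdiff,
      Function.mem_graph, Set.mem_singleton_iff, Function.update_self]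
    omega
  · simp [sMutMinus, hw]

theorem mutPlus_cutOf_graph (hS : Q.IsSlice C (Function.graph h)) {v : Q.V}
    (hv : Q.IsStrictSource (Q.cutOf C (Function.graph h)) v) :
    Q.mutPlus (Q.cutOf C (Function.graph h)) v =
      Q.cutOf C (Function.graph (Function.update h v (h v - 1))) := by
  -- An arrow `a : u → v` with `u ≠ v` lies in the cut, so the slice condition forces
  -- `h v = h u - g a + 1`: lowering `v` by one takes `a` out of the cut.
  ext a
  have hslice := isSlice_graph_iff.1 hS a
  have hin := hv.1 a
  have hout := hv.2 a
  simp only [mutPlus, mem_cutOf_graph, Set.mem_union, Set.mem_sdiff, Set.mem_ofPred_eq,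
    Function.update_apply] at hin hout ⊢
  grind

theorem mutMinus_cutOf_graph (hS : Q.IsSlice C (Function.graph h)) {v : Q.V}
    (hv : Q.IsStrictSink (Q.cutOf C (Function.graph h)) v) :
    Q.mutMinus (Q.cutOf C (Function.graph h)) v =
      Q.cutOf C (Function.graph (Function.update h v (h v + 1))) := by
  ext a
  have hslice := isSlice_graph_iff.1 hS a
  have hout := hv.1 a
  have hin := hv.2 a
  simp only [mutMinus, mem_cutOf_graph, Set.mem_union, Set.mem_sdiff, Set.mem_ofPred_eq,
    Function.update_apply] at hin hout ⊢
  grind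

end PreQuiver

theorem stmt_7_general (Q : PreQuiver) (C : Set Q.A)
    (S : Set (Q.V × ℤ)) (hS : Q.IsSlice C S)
    (x : Q.V × ℤ) (hx : x ∈ S) :
    (Q.SliceStrictSource C S x ↔ Q.IsStrictSource (Q.cutOf C S) x.1) ∧
    (Q.SliceStrictSink C S x ↔ Q.IsStrictSink (Q.cutOf C S) x.1) ∧
    (Q.SliceStrictSource C S x →
      Q.mutPlus (Q.cutOf C S) x.1 = Q.cutOf C (Q.sMutPlus S x)) ∧
    (Q.SliceStrictSink C S x →
      Q.mutMinus (Q.cutOf C S) x.1 = Q.cutOf C (Q.sMutMinus S x)) := by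
  classical
  obtain ⟨h, rfl⟩ := hS.exists_graph_eq
  obtain ⟨v, ℓ⟩ := x
  obtain rfl : h v = ℓ := hx
  rw [PreQuiver.sMutPlus_graph, PreQuiver.sMutMinus_graph]
  exact ⟨PreQuiver.sliceStrictSource_graph_iff, PreQuiver.sliceStrictSink_graph_iff,
    fun hv => PreQuiver.mutPlus_cutOf_graph hS (PreQuiver.sliceStrictSource_graph_iff.1 hv),
    fun hv => PreQuiver.mutMinus_cutOf_graph hS (PreQuiver.sliceStrictSink_graph_iff.1 hv)⟩

/-- Let `(Q,C)` be a truncated quiver with `Q` connected, `S` a slice of `ℤ(Q,C)`,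
`C_S := Q₁ \ π(S₁)`, and `x ∈ S₀`.  Then (a) `x` is a strict source (resp. strict sink) of `S`
iff `π(x)` is a strict source (resp. strict sink) of `(Q, C_S)`; and (b) in that case
`μ⁺_{π(x)}(C_S) = C_{μ⁺ₓ(S)}` (resp. `μ⁻_{π(x)}(C_S) = C_{μ⁻ₓ(S)}`). -/
theorem stmt_7 (Q : PreQuiver) [Finite Q.V] [Finite Q.A] (C : Set Q.A)
    (hconn : Q.Connected) (S : Set (Q.V × ℤ)) (hS : Q.IsSlice C S)
    (x : Q.V × ℤ) (hx : x ∈ S) :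
    (Q.SliceStrictSource C S x ↔ Q.IsStrictSource (Q.cutOf C S) x.1) ∧
    (Q.SliceStrictSink C S x ↔ Q.IsStrictSink (Q.cutOf C S) x.1) ∧
    (Q.SliceStrictSource C S x →
      Q.mutPlus (Q.cutOf C S) x.1 = Q.cutOf C (Q.sMutPlus S x)) ∧
    (Q.SliceStrictSink C S x →
      Q.mutMinus (Q.cutOf C S) x.1 = Q.cutOf C (Q.sMutMinus S x)) :=
  stmt_7_general Q C S hS x hx
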